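/- For i = 1,2 set A^i = (x^i)² + 2x^iy^i − (y^i)² and B^i = (y^i)² + 2x^iy^i − (x^i)². On the domain D = {(x¹,x²,y¹,y²) ∈ ℝ⁴ : x¹ + y¹ ≠ 0, x² + y² ≠ 0, A¹ ≠ 0, A² ≠ 0, B¹ ≠ 0, B² ≠ 0}, consider the web function f¹ = ((x¹)² + (y¹)²)/(x¹ + y¹), f² = ((x²)² + (y²)²)/(x² + y²). Then the Jacobian matrices f̄ and f̃ are the invertible diagonal matrices with diagonal entries A^i/(x^i + y^i)² and B^i/(x^i + y^i)² respectively, and the connection coefficients are: Γ¹₁₁ = 4x¹y¹(x¹ + y¹)/(A¹B¹), Γ²₂₂ = 4x²y²(x² + y²)/(A²B²), and Γ^i_{jk} = 0 for all other index triples; in particular the torsion tensor vanishes. -/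

import Mathlib

/-!
Each component `fⁱ` depends only on the pair `(xⁱ, yⁱ)`, so both Jacobians are diagonal and the
only mixed second derivatives that survive are `∂²fⁱ/∂xⁱ∂yⁱ`. Hence `Γⁱ_{jk}` vanishes unless
`i = j = k`, where it is `-(∂²fⁱ/∂xⁱ∂yⁱ) / (∂fⁱ/∂xⁱ · ∂fⁱ/∂yⁱ)`; in particular it is symmetric in
`j, k`, so the torsion vanishes. The rest is one-variable calculus for `(s² + t²)/(s + t)`.
-/

noncomputable section

/-- Points of ℝ⁴ with coordinates (x¹, x², y¹, y²). -/
abbrev Pt : Type := ℝ × ℝ × ℝ × ℝ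

/-- Partial derivative with respect to x^j (j = 0 ↦ x¹, j = 1 ↦ x²). -/
def pdx (j : Fin 2) (F : Pt → ℝ) (p : Pt) : ℝ :=
  if j = 0 then deriv (fun t => F (t, p.2.1, p.2.2.1, p.2.2.2)) p.1
  else deriv (fun t => F (p.1, t, p.2.2.1, p.2.2.2)) p.2.1

/-- Partial derivative with respect to y^k (k = 0 ↦ y¹, k = 1 ↦ y²). -/
def pdy (k : Fin 2) (F : Pt → ℝ) (p : Pt) : ℝ :=
  if k = 0 then deriv (fun t => F (p.1, p.2.1, t, p.2.2.2)) p.2.2.1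
  else deriv (fun t => F (p.1, p.2.1, p.2.2.1, t)) p.2.2.2

/-- Jacobian matrix f̄ with entries f̄^i_j = ∂f^i/∂x^j. -/
def fbar (f : Fin 2 → Pt → ℝ) (p : Pt) : Matrix (Fin 2) (Fin 2) ℝ :=
  Matrix.of fun i j => pdx j (f i) p

/-- Jacobian matrix f̃ with entries f̃^i_k = ∂f^i/∂y^k. -/
def ftil (f : Fin 2 → Pt → ℝ) (p : Pt) : Matrix (Fin 2) (Fin 2) ℝ :=
  Matrix.of fun i k => pdy k (f i) p

/-- Connection coefficients Γ^i_{jk} = −Σ_{l,m} (∂²f^i/∂x^l∂y^m) ḡ^l_j g̃^m_k,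
where ḡ = f̄⁻¹ and g̃ = f̃⁻¹. -/
def Gam (f : Fin 2 → Pt → ℝ) (i j k : Fin 2) (p : Pt) : ℝ :=
  - ∑ l : Fin 2, ∑ m : Fin 2,
      pdy m (pdx l (f i)) p * (fbar f p)⁻¹ l j * (ftil f p)⁻¹ m k

/-- Torsion tensor a^i_{jk} = (Γ^i_{jk} − Γ^i_{kj})/2. -/
def tors (f : Fin 2 → Pt → ℝ) (i j k : Fin 2) (p : Pt) : ℝ :=
  (Gam f i j k p - Gam f i k j p) / 2

/-- The web function: f¹ = ((x¹)² + (y¹)²)/(x¹ + y¹), f² = ((x²)² + (y²)²)/(x² + y²). -/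
def w : Fin 2 → Pt → ℝ :=
  ![fun p => (p.1 ^ 2 + p.2.2.1 ^ 2) / (p.1 + p.2.2.1), fun p => (p.2.1 ^ 2 + p.2.2.2 ^ 2) / (p.2.1 + p.2.2.2)]

open Matrix

def xCoord (i : Fin 2) (p : Pt) : ℝ := ![p.1, p.2.1] i

def yCoord (i : Fin 2) (p : Pt) : ℝ := ![p.2.2.1, p.2.2.2] i

def splitWeb (φ : Fin 2 → ℝ → ℝ → ℝ) : Fin 2 → Pt → ℝ :=
  fun i p => φ i (xCoord i p) (yCoord i p)

lemma pdx_coordPair (g : ℝ → ℝ → ℝ) (i j : Fin 2) :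
    pdx j (fun p => g (xCoord i p) (yCoord i p)) =
      fun p => if i = j then deriv (fun s => g s (yCoord i p)) (xCoord i p) else 0 := by
  funext p
  fin_cases i <;> fin_cases j <;> simp [pdx, xCoord, yCoord]

lemma pdy_coordPair (g : ℝ → ℝ → ℝ) (i k : Fin 2) :
    pdy k (fun p => g (xCoord i p) (yCoord i p)) =
      fun p => if i = k then deriv (fun t => g (xCoord i p) t) (yCoord i p) else 0 := by
  funext p
  fin_cases i <;> fin_cases k <;> simp [pdy, xCoord, yCoord]

lemma pdy_pdx_coordPair (g : ℝ → ℝ → ℝ) (i l m : Fin 2) (p : Pt) :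
    pdy m (pdx l (fun p => g (xCoord i p) (yCoord i p))) p =
      if i = l ∧ i = m then deriv (fun t => deriv (fun s => g s t) (xCoord i p)) (yCoord i p)
      else 0 := by
  by_cases hl : i = l
  · subst hl
    simp only [pdx_coordPair, if_true, true_and]
    exact congrFun (pdy_coordPair (fun x t => deriv (fun s => g s t) x) i m) p
  · simp [pdx_coordPair, hl, pdy]

lemma fbar_splitWeb (φ : Fin 2 → ℝ → ℝ → ℝ) (p : Pt) :
    fbar (splitWeb φ) p = diagonal fun i => deriv (fun s => φ i s (yCoord i p)) (xCoord i p) := by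
  ext i j
  exact congrFun (pdx_coordPair (φ i) i j) p

lemma ftil_splitWeb (φ : Fin 2 → ℝ → ℝ → ℝ) (p : Pt) :
    ftil (splitWeb φ) p = diagonal fun i => deriv (fun t => φ i (xCoord i p) t) (yCoord i p) := by
  ext i k
  exact congrFun (pdy_coordPair (φ i) i k) p

lemma pdy_pdx_splitWeb (φ : Fin 2 → ℝ → ℝ → ℝ) (i l m : Fin 2) (p : Pt) :
    pdy m (pdx l (splitWeb φ i)) p =
      if i = l ∧ i = m then deriv (fun t => deriv (fun s => φ i s t) (xCoord i p)) (yCoord i p)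
      else 0 :=
  pdy_pdx_coordPair (φ i) i l m p

lemma Matrix.inv_diagonal_of_ne_zero {n α : Type*} [Fintype n] [DecidableEq n] [Field α]
    {d : n → α} (hd : ∀ i, d i ≠ 0) : (diagonal d)⁻¹ = diagonal d⁻¹ := by
  refine inv_eq_left_inv ?_
  rw [diagonal_mul_diagonal, ← diagonal_one]
  exact congrArg diagonal (funext fun i => inv_mul_cancel₀ (hd i))

lemma Gam_eq_of_diagonal {f : Fin 2 → Pt → ℝ} {p : Pt} {d e c : Fin 2 → ℝ}
    (hd : ∀ i, d i ≠ 0) (he : ∀ i, e i ≠ 0)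
    (hfbar : fbar f p = diagonal d) (hftil : ftil f p = diagonal e)
    (hmixed : ∀ i l m, pdy m (pdx l (f i)) p = if i = l ∧ i = m then c i else 0)
    (i j k : Fin 2) :
    Gam f i j k p = if i = j ∧ i = k then -(c i / (d i * e i)) else 0 := by
  rw [Gam, hfbar, hftil, inv_diagonal_of_ne_zero hd, inv_diagonal_of_ne_zero he]
  simp only [hmixed, diagonal_apply, Pi.inv_apply, mul_ite, ite_mul, zero_mul, mul_zero,
    Finset.sum_ite_eq', Finset.mem_univ, if_true]
  split_ifs with h
  · obtain ⟨rfl, rfl⟩ := h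
    ring
  · exact neg_zero

lemma hasDerivAt_sqSumDivSum_left {s t : ℝ} (h : s + t ≠ 0) :
    HasDerivAt (fun s => (s ^ 2 + t ^ 2) / (s + t))
      ((s ^ 2 + 2 * s * t - t ^ 2) / (s + t) ^ 2) s :=
  (((hasDerivAt_id' s).fun_pow 2).add_const (t ^ 2) |>.fun_div
    ((hasDerivAt_id' s).add_const t) h).congr_deriv (by norm_num; ring)

lemma hasDerivAt_sqSumDivSum_right {s t : ℝ} (h : s + t ≠ 0) :
    HasDerivAt (fun t => (s ^ 2 + t ^ 2) / (s + t))
      ((t ^ 2 + 2 * s * t - s ^ 2) / (s + t) ^ 2) t :=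
  (((hasDerivAt_id' t).fun_pow 2).const_add (s ^ 2) |>.fun_div
    ((hasDerivAt_id' t).const_add s) h).congr_deriv (by norm_num; ring)

lemma deriv_deriv_sqSumDivSum {s t : ℝ} (h : s + t ≠ 0) :
    deriv (fun t => deriv (fun s => (s ^ 2 + t ^ 2) / (s + t)) s) t
      = -(4 * s * t) / (s + t) ^ 3 := by
  have hev : (fun t => deriv (fun s => (s ^ 2 + t ^ 2) / (s + t)) s) =ᶠ[nhds t]
      fun t => (s ^ 2 + 2 * s * t - t ^ 2) / (s + t) ^ 2 := by
    filter_upwards [(continuous_const.add continuous_id).continuousAt.eventually_ne h]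
      with t ht using (hasDerivAt_sqSumDivSum_left ht).deriv
  have hnum : HasDerivAt (fun t => s ^ 2 + 2 * s * t - t ^ 2) (2 * s - 2 * t) t :=
    (((hasDerivAt_id' t).const_mul (2 * s)).const_add (s ^ 2) |>.fun_sub
      ((hasDerivAt_id' t).fun_pow 2)).congr_deriv (by norm_num)
  have hden : HasDerivAt (fun t => (s + t) ^ 2) (2 * (s + t)) t :=
    (((hasDerivAt_id' t).const_add s).fun_pow 2).congr_deriv (by norm_num)
  rw [hev.deriv_eq, (hnum.fun_div hden (pow_ne_zero 2 h)).deriv]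
  field_simp
  ring

lemma w_eq_splitWeb : w = splitWeb fun _ s t => (s ^ 2 + t ^ 2) / (s + t) := by
  funext i p
  fin_cases i <;> rfl

section

variable {x1 x2 y1 y2 : ℝ}

lemma fbar_w (h1 : x1 + y1 ≠ 0) (h2 : x2 + y2 ≠ 0) : fbar w (x1, x2, y1, y2) = diagonal
    ![(x1 ^ 2 + 2 * x1 * y1 - y1 ^ 2) / (x1 + y1) ^ 2,
      (x2 ^ 2 + 2 * x2 * y2 - y2 ^ 2) / (x2 + y2) ^ 2] := by
  rw [w_eq_splitWeb, fbar_splitWeb]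
  congr 1
  funext i
  fin_cases i
  · exact (hasDerivAt_sqSumDivSum_left h1).deriv
  · exact (hasDerivAt_sqSumDivSum_left h2).deriv

lemma ftil_w (h1 : x1 + y1 ≠ 0) (h2 : x2 + y2 ≠ 0) : ftil w (x1, x2, y1, y2) = diagonal
    ![(y1 ^ 2 + 2 * x1 * y1 - x1 ^ 2) / (x1 + y1) ^ 2,
      (y2 ^ 2 + 2 * x2 * y2 - x2 ^ 2) / (x2 + y2) ^ 2] := by
  rw [w_eq_splitWeb, ftil_splitWeb]
  congr 1
  funext i
  fin_cases i
  · exact (hasDerivAt_sqSumDivSum_right h1).deriv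
  · exact (hasDerivAt_sqSumDivSum_right h2).deriv

lemma pdy_pdx_w (h1 : x1 + y1 ≠ 0) (h2 : x2 + y2 ≠ 0) (i l m : Fin 2) :
    pdy m (pdx l (w i)) (x1, x2, y1, y2) = if i = l ∧ i = m then
      ![-(4 * x1 * y1) / (x1 + y1) ^ 3, -(4 * x2 * y2) / (x2 + y2) ^ 3] i else 0 := by
  rw [w_eq_splitWeb, pdy_pdx_splitWeb]
  refine if_congr Iff.rfl ?_ rfl
  fin_cases i
  · exact deriv_deriv_sqSumDivSum h1
  · exact deriv_deriv_sqSumDivSum h2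

end

theorem stmt_16 (x1 x2 y1 y2 : ℝ) (h1 : x1 + y1 ≠ 0) (h2 : x2 + y2 ≠ 0)
    (hA1 : x1 ^ 2 + 2 * x1 * y1 - y1 ^ 2 ≠ 0) (hA2 : x2 ^ 2 + 2 * x2 * y2 - y2 ^ 2 ≠ 0)
    (hB1 : y1 ^ 2 + 2 * x1 * y1 - x1 ^ 2 ≠ 0) (hB2 : y2 ^ 2 + 2 * x2 * y2 - x2 ^ 2 ≠ 0) :
    fbar w (x1, x2, y1, y2) = Matrix.diagonal
      ![(x1 ^ 2 + 2 * x1 * y1 - y1 ^ 2) / (x1 + y1) ^ 2,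
        (x2 ^ 2 + 2 * x2 * y2 - y2 ^ 2) / (x2 + y2) ^ 2] ∧
    ftil w (x1, x2, y1, y2) = Matrix.diagonal
      ![(y1 ^ 2 + 2 * x1 * y1 - x1 ^ 2) / (x1 + y1) ^ 2,
        (y2 ^ 2 + 2 * x2 * y2 - x2 ^ 2) / (x2 + y2) ^ 2] ∧
    IsUnit (fbar w (x1, x2, y1, y2)) ∧
    IsUnit (ftil w (x1, x2, y1, y2)) ∧
    Gam w 0 0 0 (x1, x2, y1, y2) = 4 * x1 * y1 * (x1 + y1)
      / ((x1 ^ 2 + 2 * x1 * y1 - y1 ^ 2) * (y1 ^ 2 + 2 * x1 * y1 - x1 ^ 2)) ∧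
    Gam w 1 1 1 (x1, x2, y1, y2) = 4 * x2 * y2 * (x2 + y2)
      / ((x2 ^ 2 + 2 * x2 * y2 - y2 ^ 2) * (y2 ^ 2 + 2 * x2 * y2 - x2 ^ 2)) ∧
    (∀ i j k : Fin 2, (i, j, k) ≠ (0, 0, 0) → (i, j, k) ≠ (1, 1, 1) →
      Gam w i j k (x1, x2, y1, y2) = 0) ∧
    (∀ i j k : Fin 2, tors w i j k (x1, x2, y1, y2) = 0) := by
  have hd : ∀ i, ![(x1 ^ 2 + 2 * x1 * y1 - y1 ^ 2) / (x1 + y1) ^ 2,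
      (x2 ^ 2 + 2 * x2 * y2 - y2 ^ 2) / (x2 + y2) ^ 2] i ≠ 0 :=
    Fin.forall_fin_two.mpr ⟨div_ne_zero hA1 (pow_ne_zero 2 h1), div_ne_zero hA2 (pow_ne_zero 2 h2)⟩
  have he : ∀ i, ![(y1 ^ 2 + 2 * x1 * y1 - x1 ^ 2) / (x1 + y1) ^ 2,
      (y2 ^ 2 + 2 * x2 * y2 - x2 ^ 2) / (x2 + y2) ^ 2] i ≠ 0 :=
    Fin.forall_fin_two.mpr ⟨div_ne_zero hB1 (pow_ne_zero 2 h1), div_ne_zero hB2 (pow_ne_zero 2 h2)⟩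
  have hGam := Gam_eq_of_diagonal hd he (fbar_w h1 h2) (ftil_w h1 h2) (pdy_pdx_w h1 h2)
  refine ⟨fbar_w h1 h2, ftil_w h1 h2, ?_, ?_, ?_, ?_, ?_, fun i j k => ?_⟩
  · rw [fbar_w h1 h2]
    exact isUnit_diagonal.mpr (Pi.isUnit_iff.mpr fun i => (hd i).isUnit)
  · rw [ftil_w h1 h2]
    exact isUnit_diagonal.mpr (Pi.isUnit_iff.mpr fun i => (he i).isUnit)
  · rw [hGam, if_pos ⟨rfl, rfl⟩]
    simp only [cons_val_zero]
    field_simp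
  · rw [hGam, if_pos ⟨rfl, rfl⟩]
    simp only [cons_val_one, cons_val_zero]
    field_simp
  · intro i j k h000 h111
    rw [hGam, if_neg]
    rintro ⟨rfl, rfl⟩
    fin_cases i <;> simp_all
  · simp only [tors, hGam, and_comm, sub_self, zero_div]
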